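/- arXiv:2502.03023 — 2 statements merged into one kernel-verified Lean document; each statement's English description precedes it below -/
import Mathlib

section
/- Let K ≥ 2, and let W ∈ ℝ^K, b ∈ ℝ^K define the vector scaling map g(z)_j = W_j z_j + b_j on logits z ∈ ℝ^K. Then g is order-preserving on coordinates — meaning for all z ∈ ℝ^K and all j, j' ∈ {1,...,K}: z_j ≤ z_{j'} if and only if W_j z_j + b_j ≤ W_{j'} z_{j'} + b_{j'} — if and only if there exist a > 0 and c ∈ ℝ with W_j = a and b_j = c for all j. -/
/-- Vector scaling is order-preserving on coordinates iff the weights are a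
common positive constant and the biases are a common constant. -/
theorem vector_scaling_order_preserving_iff
    (K : ℕ) (hK : 2 ≤ K) (W b : Fin K → ℝ) :
    (∀ (z : Fin K → ℝ) (j j' : Fin K),
        z j ≤ z j' ↔ W j * z j + b j ≤ W j' * z j' + b j') ↔
      ∃ a : ℝ, 0 < a ∧ ∃ c : ℝ, ∀ j : Fin K, W j = a ∧ b j = c := by
  constructor
  · intro h
    set j0 : Fin K := ⟨0, by omega⟩ with hj0
    set j1 : Fin K := ⟨1, by omega⟩ with hj1
    have hne : j0 ≠ j1 := by simp [hj0, hj1, Fin.ext_iff]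
    have key : ∀ j j' : Fin K, j ≠ j' → ∀ x y : ℝ,
        (x ≤ y ↔ W j * x + b j ≤ W j' * y + b j') := by
      intro j j' hjj' x y
      have := h (fun k => if k = j then x else if k = j' then y else 0) j j'
      simpa [Ne.symm hjj'] using this
    have eqpair : ∀ j j' : Fin K, j ≠ j' → W j = W j' ∧ b j = b j' := by
      intro j j' hjj'
      have h1 : ∀ t : ℝ, W j * t + b j ≤ W j' * t + b j' :=
        fun t => (key j j' hjj' t t).mp le_rfl
      have h2 : ∀ t : ℝ, W j' * t + b j' ≤ W j * t + b j :=
        fun t => (key j' j hjj'.symm t t).mp le_rfl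
      constructor <;> nlinarith [h1 0, h2 0, h1 1, h2 1]
    have pos : 0 < W j0 := by
      have he := eqpair j0 j1 hne
      have h10 := key j0 j1 hne 1 0
      have hneg : ¬ (W j0 * 1 + b j0 ≤ W j1 * 0 + b j1) := by
        intro hc
        have : (1:ℝ) ≤ 0 := h10.mpr hc
        linarith
      push_neg at hneg
      nlinarith [he.1, he.2]
    refine ⟨W j0, pos, b j0, fun j => ?_⟩
    by_cases hj : j = j0
    · subst hj; exact ⟨rfl, rfl⟩
    · exact (eqpair j j0 hj)
  · rintro ⟨a, ha, c, hac⟩ z j j'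
    rw [(hac j).1, (hac j).2, (hac j').1, (hac j').2]
    constructor
    · intro hz; nlinarith
    · intro hz; nlinarith
end

section
/- Let K ≥ 2, W ∈ ℝ^{K×K}, b ∈ ℝ^K, and define the matrix scaling g(z) = Wz + b on ℝ^K. Then g preserves the coordinate ordering of every vector — i.e., for all z ∈ ℝ^K and all j, j': z_j ≤ z_{j'} iff (Wz + b)_j ≤ (Wz + b)_{j'} — if and only if W = aI + 𝟏vᵀ for some scalar a > 0 and vector v ∈ ℝ^K, and b is a constant vector (b_j = b_{j'} for all j, j'). -/
open Matrix

/-- Matrix scaling `z ↦ W z + b` preserves the coordinate ordering of every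
vector iff `W = a I + 𝟏 vᵀ` for some `a > 0` and `v ∈ ℝ^K`, and `b` is a
constant vector. -/
theorem matrix_scaling_order_preserving_iff
    (K : ℕ) (hK : 2 ≤ K) (W : Matrix (Fin K) (Fin K) ℝ) (b : Fin K → ℝ) :
    (∀ (z : Fin K → ℝ) (j j' : Fin K),
        z j ≤ z j' ↔ (W.mulVec z + b) j ≤ (W.mulVec z + b) j') ↔
      ((∃ a : ℝ, 0 < a ∧ ∃ v : Fin K → ℝ,
          W = a • (1 : Matrix (Fin K) (Fin K) ℝ) +
            Matrix.of (fun _ j => v j)) ∧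
        ∀ j j' : Fin K, b j = b j') := by
  constructor
  · intro h
    have hb : ∀ j j' : Fin K, b j = b j' := by
      intro j j'
      have h1 := (h 0 j j').mp (le_refl _)
      have h2 := (h 0 j' j).mp (le_refl _)
      simp [Matrix.mulVec_zero] at h1 h2
      linarith
    have h' : ∀ (z : Fin K → ℝ) (j j' : Fin K),
        z j ≤ z j' ↔ W.mulVec z j ≤ W.mulVec z j' := by
      intro z j j'
      have hz := h z j j'
      simp only [Pi.add_apply] at hz
      rw [hb j j'] at hz
      constructor
      · intro hle; have := hz.mp hle; linarith
      · intro hle; exact hz.mpr (by linarith)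
    have heq : ∀ (z : Fin K → ℝ) (j j' : Fin K), z j = z j' →
        W.mulVec z j = W.mulVec z j' := by
      intro z j j' hz
      have h1 := (h' z j j').mp (le_of_eq hz)
      have h2 := (h' z j' j).mp (le_of_eq hz.symm)
      linarith
    have hcol : ∀ (j j' k : Fin K), j ≠ k → j' ≠ k → W j k = W j' k := by
      intro j j' k hjk hj'k
      have := heq (fun i => if i = k then 1 else 0) j j' (by simp [hjk, hj'k])
      simpa [Matrix.mulVec, dotProduct, mul_ite, Finset.sum_ite_eq'] using this
    have hdiag : ∀ j j' : Fin K, j ≠ j' →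
        W j j + W j j' = W j' j + W j' j' := by
      intro j j' hjj'
      have := heq (fun i => (if i = j then (1:ℝ) else 0) + (if i = j' then 1 else 0))
        j j' (by simp [hjj', Ne.symm hjj'])
      simpa [Matrix.mulVec, dotProduct, mul_add, mul_ite,
        Finset.sum_add_distrib, Finset.sum_ite_eq'] using this
    set i0 : Fin K := ⟨0, by omega⟩ with hi0
    set i1 : Fin K := ⟨1, by omega⟩ with hi1
    have h01 : i0 ≠ i1 := by simp [hi0, hi1, Fin.ext_iff]
    set jk : Fin K → Fin K := fun k => if k = i0 then i1 else i0 with hjkdef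
    have hjk : ∀ k, jk k ≠ k := by
      intro k
      by_cases hk : k = i0
      · simp [hjkdef, hk]
        exact Ne.symm h01
      · simp [hjkdef, hk]
        exact fun hh => hk hh.symm
    set v : Fin K → ℝ := fun k => W (jk k) k with hvdef
    have hv : ∀ j k : Fin K, j ≠ k → W j k = v k := by
      intro j k hjkk
      exact hcol j (jk k) k hjkk (hjk k)
    set a : ℝ := W i0 i0 - v i0 with hadef
    have hdiag' : ∀ k : Fin K, W k k = a + v k := by
      intro k
      by_cases hk : k = i0
      · subst hk; simp [hadef]
      · have hd := hdiag k i0 hk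
        rw [hv k i0 hk, hv i0 k (fun hh => hk hh.symm)] at hd
        rw [hadef]; linarith
    have hApos : 0 < a := by
      have := (h' (fun i => if i = i0 then 1 else 0) i0 i1)
      simp [Matrix.mulVec, dotProduct, mul_ite, Finset.sum_ite_eq', h01,
        Ne.symm h01] at this
      have hW : W i0 i0 = a + v i0 := hdiag' i0
      have hW' : W i1 i0 = v i0 := hv i1 i0 (Ne.symm h01)
      rw [hW, hW'] at this
      by_contra hle
      push_neg at hle
      have : (1:ℝ) ≤ 0 := this.mpr (by linarith)
      linarith
    refine ⟨⟨a, hApos, v, ?_⟩, hb⟩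
    ext i j
    by_cases hij : i = j
    · subst hij
      simp [Matrix.one_apply, hdiag' i]
    · simp [Matrix.one_apply, hij, hv i j hij]
  · rintro ⟨⟨a, ha, v, rfl⟩, hb⟩
    intro z j j'
    have hbj := hb j j'
    simp only [Matrix.add_mulVec, Matrix.smul_mulVec, Matrix.one_mulVec,
      Pi.add_apply, Pi.smul_apply, smul_eq_mul]
    have hof : ∀ r : Fin K, (Matrix.of (fun _ j => v j)).mulVec z r
        = ∑ k, v k * z k := by
      intro r; simp [Matrix.mulVec, dotProduct]
    rw [hof j, hof j', hbj]
    constructor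
    · intro hz
      have := mul_le_mul_of_nonneg_left hz ha.le
      linarith
    · intro hz
      have hm : a * z j ≤ a * z j' := by linarith
      exact le_of_mul_le_mul_left hm ha
end
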